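/- Let X be a generic set of r = 2k points in P^1 x P^1, and let g_1, g_2 be a k-basis of (I_X)_{(k,1)}. Then for every a ≥ k, setting j = a − k, the 2(j+1) elements s^j g_1, s^{j−1} t g_1, ..., t^j g_1, s^j g_2, s^{j−1} t g_2, ..., t^j g_2 form a k-basis of (I_X)_{(a,1)}; in particular dim_k (I_X)_{(a,1)} = 2(a − k) + 2. -/

import Mathlib

/-!
Write `V e = (I_X)_{(e,1)}`. Genericity gives `dim V e = 2(e+1) - 2κ` whenever `κ ≤ e + 1`;
in particular `V (κ-1) = 0`. If `s f = t g` with `f, g ∈ V e`, then `f = t h` and `g = s h`, and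
`h ∈ I_X` because no point of `ℙ¹ × ℙ¹` has both `s` and `t` in its ideal; hence
`s V e ∩ t V e ⊆ s t V (e-1)`, and counting dimensions gives `V (e+1) = s V e + t V e` for
`e ≥ κ`. Starting from `V κ = ⟨g₁, g₂⟩`, induction shows that the `2(a-κ)+2` products
`s^(a-κ-i) t^i g_l` span `V a`; as this is `dim V a`, they form a basis.
-/

open MvPolynomial

noncomputable section

variable (k : Type) [Field k] [IsAlgClosed k] [CharZero k]

/-- The bigrading weight on the variables `s, t, u, v` of the total coordinate ring
`R = k[s,t,u,v]` of `ℙ¹ × ℙ¹`: `deg s = deg t = (1,0)`, `deg u = deg v = (0,1)`. -/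
def bw : Fin 4 → ℕ × ℕ := ![(1,0),(1,0),(0,1),(0,1)]

/-- The graded piece `R_{(i,j)}` of bihomogeneous forms of bidegree `(i,j)`. -/
def bideg (i j : ℕ) : Submodule k (MvPolynomial (Fin 4) k) :=
  weightedHomogeneousSubmodule k (bw) ((i, j) : ℕ × ℕ)

/-- The subalgebra `k[s,t] ⊆ R`. -/
def Kst : Subalgebra k (MvPolynomial (Fin 4) k) := Algebra.adjoin k {X 0, X 1}

/-- A point of `ℙ¹ × ℙ¹`. -/
abbrev Pt := Projectivization k (Fin 2 → k) × Projectivization k (Fin 2 → k)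

/-- A nonzero linear form in `s,t` vanishing at `A ∈ ℙ¹` (for the first factor). -/
def hForm (A : Projectivization k (Fin 2 → k)) : MvPolynomial (Fin 4) k :=
  C (A.rep 1) * X 0 - C (A.rep 0) * X 1

/-- A nonzero linear form in `u,v` vanishing at `B ∈ ℙ¹` (for the second factor). -/
def lForm (B : Projectivization k (Fin 2 → k)) : MvPolynomial (Fin 4) k :=
  C (B.rep 1) * X 2 - C (B.rep 0) * X 3

/-- The bihomogeneous ideal `I_P = (h, l)` of a point `P = A × B` of `ℙ¹ × ℙ¹`. -/
def ptIdeal (P : Pt k) : Ideal (MvPolynomial (Fin 4) k) :=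
  Ideal.span {hForm k P.1, lForm k P.2}

/-- The ideal `I_X = ⋂_{P ∈ X} I_P` of a finite set of points `X ⊆ ℙ¹ × ℙ¹`. -/
def idealX (Xpts : Finset (Pt k)) : Ideal (MvPolynomial (Fin 4) k) :=
  ⨅ P ∈ Xpts, ptIdeal k P

/-- The graded piece `(I_X)_{(i,j)}` as a `k`-vector space. -/
def pieceI (Xpts : Finset (Pt k)) (i j : ℕ) : Submodule k (MvPolynomial (Fin 4) k) :=
  (Submodule.restrictScalars k (idealX k Xpts)) ⊓ bideg k i j

/-- `X` is a generic set of `r` points of `ℙ¹ × ℙ¹`: it consists of `r` distinct points and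
its bigraded Hilbert function `H_X(i,j) = dim_k R_{(i,j)} - dim_k (I_X)_{(i,j)}`
(where `dim_k R_{(i,j)} = (i+1)(j+1)`) equals `min ((i+1)(j+1)) r` for all `(i,j)`. -/
def GenericPts (Xpts : Finset (Pt k)) (r : ℕ) : Prop :=
  Xpts.card = r ∧ ∀ i j : ℕ,
    (i+1)*(j+1) - Module.finrank k ↥(pieceI k Xpts i j) = min ((i+1)*(j+1)) r

end

open scoped Pointwise

section

variable {A ι : Type*} [CommSemiring A]

def monomialMultiples (x y : A) (j : ℕ) (g : ι → A) : Fin (j + 1) × ι → A :=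
  fun p => x ^ (j - p.1) * y ^ (p.1 : ℕ) * g p.2

lemma range_monomialMultiples_zero (x y : A) (g : ι → A) :
    Set.range (monomialMultiples x y 0 g) = Set.range g := by
  ext f
  simp [monomialMultiples]

lemma monomialMultiples_castSucc (x y : A) (j : ℕ) (g : ι → A) (i : Fin (j + 1)) (l : ι) :
    monomialMultiples x y (j + 1) g (i.castSucc, l) = x * monomialMultiples x y j g (i, l) := by
  simp only [monomialMultiples, Fin.val_castSucc]
  rw [Nat.sub_add_comm (Nat.lt_succ_iff.mp i.isLt), pow_succ]
  ring

lemma monomialMultiples_succ (x y : A) (j : ℕ) (g : ι → A) (i : Fin (j + 1)) (l : ι) :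
    monomialMultiples x y (j + 1) g (i.succ, l) = y * monomialMultiples x y j g (i, l) := by
  simp only [monomialMultiples, Fin.val_succ, Nat.add_sub_add_right, pow_succ]
  ring

lemma range_monomialMultiples_succ (x y : A) (j : ℕ) (g : ι → A) :
    Set.range (monomialMultiples x y (j + 1) g) =
      x • Set.range (monomialMultiples x y j g) ∪ y • Set.range (monomialMultiples x y j g) := by
  ext f
  simp only [Set.smul_set_range, smul_eq_mul, Set.mem_union, Set.mem_range, Prod.exists]
  constructor
  · rintro ⟨i, l, rfl⟩
    rcases Fin.eq_castSucc_or_eq_last i with ⟨i, rfl⟩ | rfl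
    · exact Or.inl ⟨i, l, (monomialMultiples_castSucc x y j g i l).symm⟩
    · exact Or.inr ⟨Fin.last j, l, by rw [← monomialMultiples_succ, Fin.succ_last]⟩
  · rintro (⟨i, l, rfl⟩ | ⟨i, l, rfl⟩)
    exacts [⟨i.castSucc, l, monomialMultiples_castSucc x y j g i l⟩,
      ⟨i.succ, l, monomialMultiples_succ x y j g i l⟩]

lemma span_monomialMultiples_succ {K : Type*} [CommSemiring K] [Algebra K A] (x y : A) (j : ℕ)
    (g : ι → A) :
    Submodule.span K (Set.range (monomialMultiples x y (j + 1) g)) =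
      x • Submodule.span K (Set.range (monomialMultiples x y j g)) ⊔
        y • Submodule.span K (Set.range (monomialMultiples x y j g)) := by
  rw [range_monomialMultiples_succ, Submodule.span_union, Submodule.span_smul,
    Submodule.span_smul]

end

section

variable {K A : Type*} [Field K] [CommRing A] [Algebra K A]

lemma finrank_smul_submodule [IsDomain A] {a : A} (ha : a ≠ 0) (V : Submodule K A) :
    Module.finrank K ↥(a • V) = Module.finrank K V :=
  (Submodule.equivMapOfInjective _ (mul_right_injective₀ ha) V).finrank_eq.symm

instance (a : A) (V : Submodule K A) [FiniteDimensional K V] : FiniteDimensional K ↥(a • V) :=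
  Module.Finite.map V _

end

lemma MvPolynomial.IsWeightedHomogeneous.of_X_mul {R σ M : Type*} [CommSemiring R]
    [AddCancelCommMonoid M] {w : σ → M} {i : σ} {h : MvPolynomial σ R} {m : M}
    (hX : IsWeightedHomogeneous w (X i * h) m) (h0 : h ≠ 0) :
    ∃ m', m = w i + m' ∧ IsWeightedHomogeneous w h m' := by
  have key : ∀ d, coeff d h ≠ 0 → w i + Finsupp.weight w d = m := fun d hd => by
    rw [← hX (d := Finsupp.single i 1 + d) (by rwa [coeff_X_mul]), map_add,
      Finsupp.weight_single, one_smul]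
  obtain ⟨d₀, hd₀⟩ := ne_zero_iff.mp h0
  exact ⟨_, (key d₀ hd₀).symm, fun d hd => add_left_cancel ((key d hd).trans (key d₀ hd₀).symm)⟩

lemma MvPolynomial.sub_aeval_mem_span_X_sub {R σ : Type*} [CommRing R]
    (τ : σ → MvPolynomial σ R) (f : MvPolynomial σ R) :
    f - aeval τ f ∈ Ideal.span (Set.range fun i => X i - τ i) := by
  induction f using MvPolynomial.induction_on with
  | C a => simp
  | add p q hp hq =>
    rw [map_add, add_sub_add_comm]
    exact Ideal.add_mem _ hp hq
  | mul_X p i hp =>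
    rw [map_mul, aeval_X,
      show p * X i - aeval τ p * τ i = (p - aeval τ p) * X i + aeval τ p * (X i - τ i) by ring]
    exact Ideal.add_mem _ (Ideal.mul_mem_right _ _ hp)
      (Ideal.mul_mem_left _ _ (Ideal.subset_span ⟨i, rfl⟩))

section

variable {k : Type} [Field k] {Xpts : Finset (Pt k)}

local notation "𝐬" => (X 0 : MvPolynomial (Fin 4) k)
local notation "𝐭" => (X 1 : MvPolynomial (Fin 4) k)

lemma weight_bw (d : Fin 4 →₀ ℕ) : Finsupp.weight bw d = (d 0 + d 1, d 2 + d 3) := by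
  simp [Finsupp.weight_eq_sum, Fin.sum_univ_four, bw, Prod.ext_iff]

lemma X_mem_bideg_one_zero {i : Fin 4} (hi : bw i = (1, 0)) :
    (X i : MvPolynomial (Fin 4) k) ∈ bideg k 1 0 := by
  have := isWeightedHomogeneous_X k bw i
  rwa [hi] at this

lemma monomialMultiples_X_eq_monomial (a : ℕ) (p : Fin (a + 1) × Fin 2) :
    monomialMultiples 𝐬 𝐭 a ![X 2, X 3] p = monomial
      (Finsupp.single 0 (a - p.1) + Finsupp.single 1 (p.1 : ℕ) + Finsupp.single (![2, 3] p.2) 1)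
      1 := by
  obtain ⟨i, l⟩ := p
  have hl : (![X 2, X 3] l : MvPolynomial (Fin 4) k) = X (![2, 3] l) := by fin_cases l <;> rfl
  rw [monomialMultiples, hl, X_pow_eq_monomial, X_pow_eq_monomial, X, monomial_mul, monomial_mul,
    one_mul, one_mul]

lemma bideg_le_span_monomialMultiples (a : ℕ) :
    bideg k a 1 ≤ Submodule.span k (Set.range (monomialMultiples 𝐬 𝐭 a ![X 2, X 3])) := by
  rw [bideg, weightedHomogeneousSubmodule_eq_finsupp_supported,
    AddMonoidAlgebra.supported_eq_span_single, Submodule.span_le]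
  rintro _ ⟨d, hd, rfl⟩
  simp only [Set.mem_ofPred_eq, weight_bw, Prod.mk.injEq] at hd
  obtain ⟨l, hl⟩ : ∃ l : Fin 2, d (![2, 3] l) = 1 := by
    rcases (by omega : d 2 = 1 ∨ d 3 = 1) with h | h
    exacts [⟨0, h⟩, ⟨1, h⟩]
  apply Submodule.subset_span
  refine ⟨(⟨d 1, by omega⟩, l), ?_⟩
  rw [monomialMultiples_X_eq_monomial]
  refine congrArg (fun e => monomial e (1 : k)) ?_
  ext i
  fin_cases i <;> fin_cases l <;> simp_all <;> omega

instance (a : ℕ) : FiniteDimensional k (bideg k a 1) :=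
  have := FiniteDimensional.span_of_finite k
    (Set.finite_range (monomialMultiples 𝐬 𝐭 a ![X 2, X 3]))
  Submodule.finiteDimensional_of_le (bideg_le_span_monomialMultiples a)

instance (a : ℕ) : FiniteDimensional k (pieceI k Xpts a 1) :=
  Submodule.finiteDimensional_of_le inf_le_right

lemma finrank_bideg_le (a : ℕ) : Module.finrank k (bideg k a 1) ≤ (a + 1) * 2 := by
  have := FiniteDimensional.span_of_finite k
    (Set.finite_range (monomialMultiples 𝐬 𝐭 a ![X 2, X 3]))
  calc Module.finrank k (bideg k a 1)
      ≤ Module.finrank k (Submodule.span k (Set.range (monomialMultiples 𝐬 𝐭 a ![X 2, X 3]))) :=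
        Submodule.finrank_mono (bideg_le_span_monomialMultiples a)
    _ ≤ (a + 1) * 2 := (finrank_range_le_card _).trans_eq (by simp)

lemma GenericPts.finrank_pieceI {κ e : ℕ} (hX : GenericPts k Xpts (2 * κ)) (he : κ ≤ e + 1) :
    Module.finrank k (pieceI k Xpts e 1) + 2 * κ = 2 * (e + 1) := by
  have hH := hX.2 e 1
  have hle : Module.finrank k (pieceI k Xpts e 1) ≤ (e + 1) * 2 :=
    (Submodule.finrank_mono inf_le_right).trans (finrank_bideg_le e)
  rw [min_eq_right (by omega)] at hH
  omega

lemma exists_sub_C_mul_mem_span_singleton {σ : Type*} (v : Fin 2 → k) (hv : v ≠ 0)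
    (x y : MvPolynomial σ k) : ∃ G : MvPolynomial σ k,
      x - C (v 0) * G ∈ Ideal.span {C (v 1) * x - C (v 0) * y} ∧
      y - C (v 1) * G ∈ Ideal.span {C (v 1) * x - C (v 0) * y} := by
  obtain ⟨c₀, c₁, hc⟩ : ∃ c₀ c₁ : k, v 1 * c₀ - v 0 * c₁ = 1 := by
    by_cases h1 : v 1 = 0
    · have h0 : v 0 ≠ 0 := fun h0 => hv (funext fun i => by fin_cases i <;> assumption)
      exact ⟨0, -(v 0)⁻¹, by simp [h1, h0]⟩
    · exact ⟨(v 1)⁻¹, 0, by simp [h1]⟩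
  have hC : C (v 1) * C c₀ - C (v 0) * C c₁ = (1 : MvPolynomial σ k) := by
    rw [← C_mul, ← C_mul, ← C_sub, hc, C_1]
  refine ⟨C c₀ * y - C c₁ * x, Ideal.mem_span_singleton'.mpr ⟨C c₀, ?_⟩,
    Ideal.mem_span_singleton'.mpr ⟨C c₁, ?_⟩⟩
  · linear_combination x * hC
  · linear_combination y * hC

/-- The parametrization `(x, y) ↦ (x • A, y • B)` of the affine cone over `P = (A, B)`. -/
noncomputable def coneParam (P : Pt k) : MvPolynomial (Fin 4) k →ₐ[k] MvPolynomial (Fin 2) k :=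
  aeval ![C (P.1.rep 0) * X 0, C (P.1.rep 1) * X 0, C (P.2.rep 0) * X 1, C (P.2.rep 1) * X 1]

lemma ptIdeal_eq_ker_coneParam (P : Pt k) : ptIdeal k P = RingHom.ker (coneParam P) := by
  apply le_antisymm
  · rw [ptIdeal, Ideal.span_le, Set.insert_subset_iff, Set.singleton_subset_iff]
    constructor <;> simp only [SetLike.mem_coe, RingHom.mem_ker] <;>
      simp [coneParam, hForm, lForm] <;> ring
  intro f hf
  obtain ⟨G, hG₀, hG₁⟩ := exists_sub_C_mul_mem_span_singleton P.1.rep P.1.rep_nonzero 𝐬 𝐭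
  obtain ⟨L, hL₂, hL₃⟩ := exists_sub_C_mul_mem_span_singleton P.2.rep P.2.rep_nonzero
    (X 2 : MvPolynomial (Fin 4) k) (X 3)
  -- `f - f(τ)` lies in `I_P`, while `f(τ) = 0` because `τ` factors through `coneParam P`.
  let τ : Fin 4 → MvPolynomial (Fin 4) k :=
    ![C (P.1.rep 0) * G, C (P.1.rep 1) * G, C (P.2.rep 0) * L, C (P.2.rep 1) * L]
  have hτ : Ideal.span (Set.range fun i => X i - τ i) ≤ ptIdeal k P := by
    have hh : Ideal.span {hForm k P.1} ≤ ptIdeal k P := Ideal.span_mono (by simp)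
    have hl : Ideal.span {lForm k P.2} ≤ ptIdeal k P := Ideal.span_mono (by simp)
    rw [Ideal.span_le]
    rintro _ ⟨i, rfl⟩
    fin_cases i
    exacts [hh hG₀, hh hG₁, hl hL₂, hl hL₃]
  have hfτ : aeval τ f = 0 := by
    have : aeval τ = (aeval ![G, L]).comp (coneParam P) := by
      refine MvPolynomial.algHom_ext fun i => ?_
      fin_cases i <;> simp [coneParam, τ]
    rw [this, AlgHom.comp_apply, RingHom.mem_ker.mp hf, map_zero]
  simpa only [hfτ, sub_zero] using hτ (sub_aeval_mem_span_X_sub τ f)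

lemma mem_ptIdeal_of_X_mul_mem {P : Pt k} {h : MvPolynomial (Fin 4) k}
    (h₀ : 𝐬 * h ∈ ptIdeal k P) (h₁ : 𝐭 * h ∈ ptIdeal k P) : h ∈ ptIdeal k P := by
  rw [ptIdeal_eq_ker_coneParam, RingHom.mem_ker] at *
  by_contra hne
  simp only [map_mul, coneParam, aeval_X] at h₀ h₁ hne
  refine P.1.rep_nonzero (funext fun i => ?_)
  fin_cases i
  · simpa using (mul_eq_zero.mp h₀).resolve_right hne
  · simpa using (mul_eq_zero.mp h₁).resolve_right hne

lemma mem_idealX_of_X_mul_mem {h : MvPolynomial (Fin 4) k}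
    (h₀ : 𝐬 * h ∈ idealX k Xpts) (h₁ : 𝐭 * h ∈ idealX k Xpts) : h ∈ idealX k Xpts := by
  simp only [idealX, Ideal.mem_iInf] at *
  exact fun P hP => mem_ptIdeal_of_X_mul_mem (h₀ P hP) (h₁ P hP)

lemma exists_of_X_mul_eq_X_mul {f g : MvPolynomial (Fin 4) k} (hf : f ∈ idealX k Xpts)
    (hg : g ∈ idealX k Xpts) (hfg : 𝐬 * f = 𝐭 * g) :
    ∃ h ∈ idealX k Xpts, f = 𝐭 * h ∧ g = 𝐬 * h := by
  obtain ⟨h, rfl⟩ : 𝐬 ∣ g := by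
    simpa [X_dvd_X] using X_dvd_mul_iff.mp (Dvd.intro f hfg)
  obtain rfl : f = 𝐭 * h := mul_left_cancel₀ (X_ne_zero 0) (by rw [hfg]; ring)
  exact ⟨h, mem_idealX_of_X_mul_mem hg hf, rfl, rfl⟩

lemma eq_zero_or_mem_bideg_of_X_mul_mem {i : Fin 4} (hi : bw i = (1, 0))
    {h : MvPolynomial (Fin 4) k} {e j : ℕ} (hh : X i * h ∈ bideg k e j) :
    h = 0 ∨ ∃ e', e = e' + 1 ∧ h ∈ bideg k e' j := by
  refine or_iff_not_imp_left.mpr fun h0 => ?_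
  obtain ⟨⟨e', j'⟩, he, hh'⟩ := IsWeightedHomogeneous.of_X_mul hh h0
  simp only [hi, Prod.mk_add_mk, zero_add, Prod.mk.injEq] at he
  obtain ⟨rfl, rfl⟩ := he
  exact ⟨e', add_comm _ _, hh'⟩

lemma smul_pieceI_le {f : MvPolynomial (Fin 4) k} {d₁ d₂ : ℕ} (hf : f ∈ bideg k d₁ d₂) (i j : ℕ) :
    f • pieceI k Xpts i j ≤ pieceI k Xpts (i + d₁) (j + d₂) := by
  rintro _ ⟨g, hg, rfl⟩
  rw [add_comm i, add_comm j]
  exact ⟨Ideal.mul_mem_left _ f hg.1, hf.mul hg.2⟩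

lemma exists_of_mem_X_smul_inf_X_smul_pieceI {e : ℕ} {x : MvPolynomial (Fin 4) k}
    (hx : x ∈ 𝐬 • pieceI k Xpts e 1 ⊓ 𝐭 • pieceI k Xpts e 1) :
    ∃ h ∈ idealX k Xpts, 𝐭 * h ∈ bideg k e 1 ∧ x = 𝐬 * 𝐭 * h := by
  obtain ⟨f, hf, rfl⟩ := (Submodule.mem_smul_pointwise_iff_exists _ _ _).mp hx.1
  obtain ⟨g, hg, hfg⟩ := (Submodule.mem_smul_pointwise_iff_exists _ _ _).mp hx.2
  rw [smul_eq_mul, smul_eq_mul] at hfg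
  obtain ⟨h, hh, rfl, rfl⟩ := exists_of_X_mul_eq_X_mul hf.1 hg.1 hfg.symm
  exact ⟨h, hh, hf.2, by rw [smul_eq_mul, mul_assoc]⟩

lemma X_smul_inf_X_smul_pieceI_le (e : ℕ) :
    𝐬 • pieceI k Xpts (e + 1) 1 ⊓ 𝐭 • pieceI k Xpts (e + 1) 1 ≤ (𝐬 * 𝐭) • pieceI k Xpts e 1 := by
  intro x hx
  obtain ⟨h, hh, hth, rfl⟩ := exists_of_mem_X_smul_inf_X_smul_pieceI hx
  refine (Submodule.mem_smul_pointwise_iff_exists _ _ _).mpr ⟨h, ?_, rfl⟩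
  rcases eq_zero_or_mem_bideg_of_X_mul_mem rfl hth with rfl | ⟨e', he, hh'⟩
  · exact zero_mem _
  · obtain rfl : e' = e := by omega
    exact ⟨hh, hh'⟩

lemma X_smul_inf_X_smul_pieceI_zero : 𝐬 • pieceI k Xpts 0 1 ⊓ 𝐭 • pieceI k Xpts 0 1 = ⊥ := by
  refine eq_bot_iff.mpr fun x hx => ?_
  obtain ⟨h, -, hth, rfl⟩ := exists_of_mem_X_smul_inf_X_smul_pieceI hx
  rcases eq_zero_or_mem_bideg_of_X_mul_mem rfl hth with rfl | ⟨e', he, -⟩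
  · simp
  · omega

lemma GenericPts.X_smul_sup_X_smul_pieceI {κ e : ℕ} (hX : GenericPts k Xpts (2 * κ))
    (he : κ ≤ e) : 𝐬 • pieceI k Xpts e 1 ⊔ 𝐭 • pieceI k Xpts e 1 = pieceI k Xpts (e + 1) 1 := by
  have hs₀ : 𝐬 • pieceI k Xpts e 1 ≤ pieceI k Xpts (e + 1) 1 :=
    smul_pieceI_le (X_mem_bideg_one_zero rfl) e 1
  have hs₁ : 𝐭 • pieceI k Xpts e 1 ≤ pieceI k Xpts (e + 1) 1 :=
    smul_pieceI_le (X_mem_bideg_one_zero rfl) e 1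
  have hinf : Module.finrank k ↥(𝐬 • pieceI k Xpts e 1 ⊓ 𝐭 • pieceI k Xpts e 1) + 2 ≤
      Module.finrank k (pieceI k Xpts e 1) := by
    rcases e with _ | e
    · rw [X_smul_inf_X_smul_pieceI_zero, finrank_bot]
      have := hX.finrank_pieceI (e := 0) (by omega)
      omega
    · have := (Submodule.finrank_mono (X_smul_inf_X_smul_pieceI_le e)).trans_eq
        (finrank_smul_submodule (mul_ne_zero (X_ne_zero 0) (X_ne_zero 1)) (pieceI k Xpts e 1))
      have := hX.finrank_pieceI (e := e) (by omega)
      have := hX.finrank_pieceI (e := e + 1) (by omega)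
      omega
  refine Submodule.eq_of_le_of_finrank_le (sup_le hs₀ hs₁) ?_
  have := Submodule.finrank_sup_add_finrank_inf_eq (𝐬 • pieceI k Xpts e 1) (𝐭 • pieceI k Xpts e 1)
  rw [finrank_smul_submodule (X_ne_zero 0), finrank_smul_submodule (X_ne_zero 1)] at this
  have := hX.finrank_pieceI (e := e) (by omega)
  have := hX.finrank_pieceI (e := e + 1) (by omega)
  omega

lemma GenericPts.span_monomialMultiples_eq_pieceI {κ : ℕ} (hX : GenericPts k Xpts (2 * κ))
    {g₁ g₂ : MvPolynomial (Fin 4) k} (hspan : Submodule.span k {g₁, g₂} = pieceI k Xpts κ 1)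
    (j : ℕ) : Submodule.span k (Set.range (monomialMultiples 𝐬 𝐭 j ![g₁, g₂])) =
      pieceI k Xpts (κ + j) 1 := by
  induction j with
  | zero => rwa [range_monomialMultiples_zero, Matrix.range_cons_cons_empty]
  | succ j ih =>
    rw [span_monomialMultiples_succ, ih,
      GenericPts.X_smul_sup_X_smul_pieceI hX (Nat.le_add_right κ j)]
    rfl

end

theorem stmt3_general {k : Type} [Field k] (κ : ℕ)
    (Xpts : Finset (Pt k)) (hX : GenericPts k Xpts (2 * κ))
    (g₁ g₂ : MvPolynomial (Fin 4) k)
    (hspan : Submodule.span k {g₁, g₂} = pieceI k Xpts κ 1)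
    (a : ℕ) (ha : κ ≤ a) :
    LinearIndependent k
      (fun p : Fin (a - κ + 1) × Fin 2 =>
        X 0 ^ (a - κ - (p.1 : ℕ)) * X 1 ^ (p.1 : ℕ) * ![g₁, g₂] p.2) ∧
    Submodule.span k
      (Set.range fun p : Fin (a - κ + 1) × Fin 2 =>
        X 0 ^ (a - κ - (p.1 : ℕ)) * X 1 ^ (p.1 : ℕ) * ![g₁, g₂] p.2) =
      pieceI k Xpts a 1 ∧
    Module.finrank k ↥(pieceI k Xpts a 1) = 2 * (a - κ) + 2 := by
  have hspanF : Submodule.span k (Set.range (monomialMultiples (X 0) (X 1) (a - κ) ![g₁, g₂])) =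
      pieceI k Xpts a 1 := by
    rw [hX.span_monomialMultiples_eq_pieceI hspan, Nat.add_sub_cancel' ha]
  have hdim : Module.finrank k (pieceI k Xpts a 1) = 2 * (a - κ) + 2 := by
    have := hX.finrank_pieceI (e := a) (by omega)
    omega
  have hli : LinearIndependent k (monomialMultiples (X 0) (X 1) (a - κ) ![g₁, g₂]) := by
    rw [linearIndependent_iff_card_eq_finrank_span, Set.finrank, hspanF, hdim]
    simp only [Fintype.card_prod, Fintype.card_fin]
    ring
  exact ⟨hli, hspanF, hdim⟩

theorem stmt3 {k : Type} [Field k] [IsAlgClosed k] [CharZero k] (κ : ℕ)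
    (Xpts : Finset (Pt k)) (hX : GenericPts k Xpts (2 * κ))
    (g₁ g₂ : MvPolynomial (Fin 4) k)
    (hg₁ : g₁ ∈ pieceI k Xpts κ 1) (hg₂ : g₂ ∈ pieceI k Xpts κ 1)
    (hli : LinearIndependent k ![g₁, g₂])
    (hspan : Submodule.span k {g₁, g₂} = pieceI k Xpts κ 1)
    (a : ℕ) (ha : κ ≤ a) :
    LinearIndependent k
      (fun p : Fin (a - κ + 1) × Fin 2 =>
        X 0 ^ (a - κ - (p.1 : ℕ)) * X 1 ^ (p.1 : ℕ) * ![g₁, g₂] p.2) ∧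
    Submodule.span k
      (Set.range fun p : Fin (a - κ + 1) × Fin 2 =>
        X 0 ^ (a - κ - (p.1 : ℕ)) * X 1 ^ (p.1 : ℕ) * ![g₁, g₂] p.2) =
      pieceI k Xpts a 1 ∧
    Module.finrank k ↥(pieceI k Xpts a 1) = 2 * (a - κ) + 2 :=
  stmt3_general κ Xpts hX g₁ g₂ hspan a ha
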